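/- arXiv:2509.26559 — 3 statements merged into one kernel-verified Lean document; each statement's English description precedes it below -/
import Mathlib

section
/- Let m ≥ 0 be an integer and let k be an integer with |k| ≥ 2. For every positive divisor d of |k| with d < |k|, and for every positive integer r with gcd(r, |k|/d) = 1, one has τ_k(|k|·m + d·r + 1) ≡ 0 (mod |k|/d). -/
open PowerSeries Finset

/-- `1 - X^(m+1)` is a unit in `ℤ⟦X⟧`. -/
lemma isUnit_one_sub_X_pow (m : ℕ) :
    IsUnit ((1 : PowerSeries ℤ) - (PowerSeries.X : PowerSeries ℤ) ^ (m + 1)) := by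
  rw [PowerSeries.isUnit_iff_constantCoeff]
  simp

/-- `tau k n` is the coefficient of `q^n` in `q·∏_{m=1}^∞ (1-q^m)^k` (`k : ℤ`).  Since each
factor `(1-q^m)^(±|k|)` is `1 + (terms of degree ≥ m)`, the coefficient of `q^(n-1)` in the
infinite product agrees with that of the finite product `∏_{m=1}^{n} (1-q^m)^k`, computed in
the unit group of `ℤ⟦X⟧` (so that negative exponents make sense). -/
noncomputable def tau (k : ℤ) (n : ℕ) : ℤ :=
  PowerSeries.coeff (R := ℤ) (n - 1)
    ((↑(∏ m ∈ Finset.range n, (isUnit_one_sub_X_pow m).unit ^ k) : PowerSeries ℤ))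

/-!
Differentiating `f = u^k` gives `f' = k u^(k-1) u'`, so every coefficient of `f'` is divisible
by `k`; the `n`-th one is `(n+1)` times a coefficient of `f`. Hence `k ∣ N τ_k(N+1)` for all `N`.
With `|k| = dq` and `N = |k|m + dr`, cancelling `d` leaves `q ∣ (qm + r) τ_k(N+1)`, so
`q ∣ r τ_k(N+1)` and, as `r` is prime to `q`, `q ∣ τ_k(N+1)`.
-/

namespace Derivation

variable {R A M : Type*} [CommRing R] [CommRing A] [Algebra R A] [AddCommGroup M]
  [Module A M] [Module R M] (D : Derivation R A M)

theorem leibniz_units_zpow (u : Aˣ) (n : ℤ) :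
    D ↑(u ^ n) = n • (↑(u ^ (n - 1)) : A) • D ↑u := by
  have hnat (j : ℕ) : D ↑(u ^ (j : ℤ)) = (j : ℤ) • (↑(u ^ ((j : ℤ) - 1)) : A) • D ↑u := by
    rcases j with _ | j
    · simp
    · rw [zpow_natCast, Units.val_pow_eq_pow_val, leibniz_pow, natCast_zsmul]
      simp
  obtain ⟨n, rfl | rfl⟩ := Int.eq_nat_or_neg n
  · exact hnat n
  · have hmul : (↑(u ^ (-(n : ℤ))) : A) * ↑(u ^ (n : ℤ)) = 1 := by
      rw [← Units.val_mul, ← zpow_add]; simp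
    have hpow : (↑(u ^ (-(n : ℤ))) : A) ^ 2 * ↑(u ^ ((n : ℤ) - 1)) = ↑(u ^ (-(n : ℤ) - 1)) := by
      rw [← Units.val_pow_eq_pow_val, ← Units.val_mul, ← zpow_natCast, ← zpow_mul, ← zpow_add]
      congr 2; ring
    rw [D.leibniz_of_mul_eq_one hmul, hnat, smul_comm, smul_smul, neg_mul, hpow, neg_smul,
      neg_smul, smul_neg]

end Derivation

theorem PowerSeries.intCast_dvd_mul_coeff_units_zpow {R : Type*} [CommRing R] (u : R⟦X⟧ˣ)
    (k : ℤ) (n : ℕ) : (k : R) ∣ n * coeff n ↑(u ^ k) := by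
  rcases n with _ | n
  · simp
  · have h := congrArg (coeff n) ((d⁄dX R).leibniz_units_zpow u k)
    rw [coeff_derivative, map_zsmul] at h
    rw [mul_comm, Nat.cast_succ, h, zsmul_eq_mul]
    exact dvd_mul_right _ _

theorem tau_succ (k : ℤ) (n : ℕ) :
    tau k (n + 1) = coeff n ↑((∏ i ∈ range (n + 1), (isUnit_one_sub_X_pow i).unit) ^ k) := by
  rw [tau, Nat.add_sub_cancel, ← prod_zpow]

theorem dvd_mul_tau_succ (k : ℤ) (n : ℕ) : k ∣ n * tau k (n + 1) := by
  rw [tau_succ]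
  exact_mod_cast intCast_dvd_mul_coeff_units_zpow _ k n

theorem Int.dvd_of_dvd_mul_add_mul_of_isCoprime {q m r t : ℤ} (h : q ∣ (q * m + r) * t)
    (hqr : IsCoprime q r) : q ∣ t := by
  rw [add_mul, mul_assoc, dvd_add_right (dvd_mul_right q _)] at h
  exact hqr.dvd_of_dvd_mul_left h

theorem tau_modEq_zero_divisor_general (m : ℕ) (k : ℤ)
    (d : ℕ) (hd0 : 0 < d) (hdvd : d ∣ k.natAbs)
    (r : ℕ) (hgcd : Nat.gcd r (k.natAbs / d) = 1) :
    tau k (k.natAbs * m + d * r + 1) ≡ 0 [ZMOD ((k.natAbs / d : ℕ) : ℤ)] := by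
  set q := k.natAbs / d
  set t := tau k (k.natAbs * m + d * r + 1)
  have hkdq : k.natAbs = d * q := (Nat.mul_div_cancel' hdvd).symm
  have hdq : (d : ℤ) * q ∣ d * ((q * m + r) * t) := by
    have h : k ∣ ((k.natAbs * m + d * r : ℕ) : ℤ) * t := dvd_mul_tau_succ k _
    rw [← Int.natAbs_dvd, hkdq] at h
    push_cast at h
    convert h using 1; ring
  have hcop : IsCoprime (q : ℤ) r := by
    rwa [Int.isCoprime_iff_gcd_eq_one, Int.gcd_natCast_natCast, Nat.gcd_comm]
  rw [Int.modEq_zero_iff_dvd]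
  exact Int.dvd_of_dvd_mul_add_mul_of_isCoprime
    ((mul_dvd_mul_iff_left (by exact_mod_cast hd0.ne')).mp hdq) hcop

/-- For `|k| ≥ 2`, `m ≥ 0`, any positive divisor `d` of `|k|` with `d < |k|`, and any positive
integer `r` with `gcd(r, |k|/d) = 1`, we have `τ_k(|k|m + dr + 1) ≡ 0 (mod |k|/d)`. -/
theorem tau_modEq_zero_divisor (m : ℕ) (k : ℤ) (hk : 2 ≤ |k|)
    (d : ℕ) (hd0 : 0 < d) (hdvd : d ∣ k.natAbs) (hdlt : d < k.natAbs)
    (r : ℕ) (hr : 0 < r) (hgcd : Nat.gcd r (k.natAbs / d) = 1) :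
    tau k (k.natAbs * m + d * r + 1) ≡ 0 [ZMOD ((k.natAbs / d : ℕ) : ℤ)] :=
  tau_modEq_zero_divisor_general m k d hd0 hdvd r hgcd
end

section
/- Let k be a positive integer and let A = {a ∈ ℕ : 1 ≤ a ≤ k and C(k, a) ≡ 1 (mod 2)}. Then for every positive integer n, τ_k(n+1) ≡ F_A(n) (mod 2). -/
open PowerSeries Finset

/-- `F A n` is the number of partitions of `n` in which the multiplicity of every part
belongs to `A`. -/
noncomputable def FA (A : Set ℕ) (n : ℕ) : ℕ :=
  Nat.card {p : n.Partition // ∀ a ∈ p.parts, p.parts.count a ∈ A}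

/-!
By the binomial theorem `(1 - q^m)^k = ∑_a (-1)^a C(k,a) q^(ma)`, so expanding
`∏_m (1 - q^m)^k` as a partition generating function gives
`τ_k(n+1) = ∑_{λ ⊢ n} ∏_m (-1)^(c_m) C(k, c_m)`, where `c_m` is the multiplicity of the part `m`
in `λ`. Modulo 2 a summand is `1` exactly when every `C(k, c_m)` with `c_m ≠ 0` is odd, that is,
when every multiplicity of `λ` lies in `A`, and `0` otherwise.
-/

open scoped PowerSeries.WithPiTopology

namespace PowerSeries

variable {R : Type*} [CommRing R]

theorem coeff_mul_of_X_pow_dvd_sub_one {n : ℕ} {φ ψ : R⟦X⟧} (h : X ^ (n + 1) ∣ φ - 1) :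
    coeff n (φ * ψ) = coeff n ψ := by
  have hdvd : X ^ (n + 1) ∣ φ * ψ - ψ := by
    rw [← sub_one_mul]
    exact dvd_mul_of_dvd_left h ψ
  rw [← sub_eq_zero, ← map_sub]
  exact X_pow_dvd_iff.mp hdvd n n.lt_succ_self

theorem X_pow_dvd_prod_sub_one {ι : Type*} {n : ℕ} {s : Finset ι} {g : ι → R⟦X⟧}
    (h : ∀ i ∈ s, X ^ n ∣ g i - 1) : X ^ n ∣ ∏ i ∈ s, g i - 1 := by
  refine prod_induction g (fun φ ↦ X ^ n ∣ φ - 1) (fun φ ψ hφ hψ ↦ ?_) (by simp) h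
  rw [show φ * ψ - 1 = (φ - 1) * ψ + (ψ - 1) by ring]
  exact dvd_add (dvd_mul_of_dvd_left hφ ψ) hψ

theorem coeff_eq_coeff_prod_range_of_hasProd [TopologicalSpace R] [T2Space R]
    {g : ℕ → R⟦X⟧} {φ : R⟦X⟧} (hφ : HasProd g φ) (hg : ∀ i, X ^ (i + 1) ∣ g i - 1)
    {n N : ℕ} (hnN : n ≤ N) : coeff n φ = coeff n (∏ i ∈ range N, g i) := by
  have hlim := (WithPiTopology.tendsto_iff_coeff_tendsto _ _ _ _).mp hφ n
  refine tendsto_nhds_unique hlim (tendsto_atTop_of_eventually_const fun s (hs : range N ⊆ s) ↦ ?_)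
  rw [← prod_sdiff hs]
  refine coeff_mul_of_X_pow_dvd_sub_one (X_pow_dvd_prod_sub_one fun i hi ↦ ?_)
  have hNi : N ≤ i := by simpa using (mem_sdiff.mp hi).2
  exact (pow_dvd_pow X (by omega)).trans (hg i)

theorem one_add_tsum_eq_one_sub_X_pow_pow [TopologicalSpace R] (k i : ℕ) :
    (1 : R⟦X⟧) + ∑' j, ((-1) ^ (j + 1) * (k.choose (j + 1) : R)) • X ^ (i * (j + 1)) =
      (1 - X ^ i) ^ k := by
  rw [tsum_eq_sum (s := range k) fun j hj ↦ by
    rw [Nat.choose_eq_zero_of_lt (by simpa using hj)]; simp]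
  rw [sub_eq_neg_add, add_pow, sum_range_succ', add_comm]
  congr 1
  · refine sum_congr rfl fun j _ ↦ ?_
    rw [neg_pow (X ^ i), ← pow_mul, smul_eq_C_mul, one_pow, mul_one, map_mul, map_pow, map_neg,
      map_one, map_natCast]
    ring
  · simp

end PowerSeries

namespace Nat.Partition

variable {R : Type*} [CommRing R] [TopologicalSpace R] [T2Space R]

theorem hasProd_one_sub_X_pow_pow (k : ℕ) :
    HasProd (fun i ↦ ((1 : R⟦X⟧) - X ^ (i + 1)) ^ k)
      (genFun fun _ c ↦ (-1) ^ c * (k.choose c : R)) := by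
  simpa only [one_add_tsum_eq_one_sub_X_pow_pow] using
    hasProd_genFun (R := R) fun _ c ↦ (-1) ^ c * (k.choose c : R)

end Nat.Partition

theorem tau_natCast_add_one (k n : ℕ) :
    tau k (n + 1) = coeff n (∏ m ∈ range (n + 1), ((1 : ℤ⟦X⟧) - X ^ (m + 1)) ^ k) := by
  simp [tau, Units.coe_prod, zpow_natCast]

theorem tau_natCast_add_one_eq_sum (k n : ℕ) :
    tau k (n + 1) =
      ∑ p : n.Partition, p.parts.toFinsupp.prod fun _ c ↦ (-1) ^ c * (k.choose c : ℤ) := by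
  rw [tau_natCast_add_one, ← coeff_eq_coeff_prod_range_of_hasProd
    (Nat.Partition.hasProd_one_sub_X_pow_pow k) (fun i ↦ ?_) n.le_succ, Nat.Partition.coeff_genFun]
  have h := sub_one_dvd_pow_sub_one ((1 : ℤ⟦X⟧) - X ^ (i + 1)) k
  rwa [sub_sub_cancel_left, neg_dvd] at h

theorem ZMod.natCast_two_eq_ite (m : ℕ) : (m : ZMod 2) = if Odd m then 1 else 0 := by
  split_ifs with h
  · exact natCast_eq_one_iff_odd.mpr h
  · exact natCast_eq_zero_iff_even.mpr (Nat.not_odd_iff_even.mp h)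

theorem Nat.Partition.cast_prod_neg_one_pow_mul_choose {n : ℕ} (p : n.Partition) (k : ℕ) :
    ((p.parts.toFinsupp.prod fun _ c ↦ (-1) ^ c * (k.choose c : ℤ) : ℤ) : ZMod 2) =
      if ∀ a ∈ p.parts, p.parts.count a ∈ {a : ℕ | 1 ≤ a ∧ a ≤ k ∧ k.choose a % 2 = 1}
      then 1 else 0 := by
  have hodd : ∀ a ∈ p.parts.toFinset,
      Odd (k.choose (p.parts.count a)) ↔
        p.parts.count a ∈ {a : ℕ | 1 ≤ a ∧ a ≤ k ∧ k.choose a % 2 = 1} := by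
    intro a ha
    rw [Multiset.mem_toFinset, ← Multiset.one_le_count_iff_mem] at ha
    refine ⟨fun h ↦ ⟨ha, ?_, Nat.odd_iff.mp h⟩, fun h ↦ Nat.odd_iff.mpr h.2.2⟩
    by_contra hk
    simp [Nat.choose_eq_zero_of_lt (not_le.mp hk)] at h
  simp only [Finsupp.prod, Multiset.toFinsupp_support, Multiset.toFinsupp_apply, Int.cast_prod,
    Int.cast_mul, Int.cast_pow, Int.cast_neg, Int.cast_one, Int.cast_natCast,
    ZMod.natCast_two_eq_ite, CharTwo.neg_eq, one_pow, one_mul]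
  rw [prod_boole, if_congr (forall₂_congr hodd) rfl rfl]
  simp only [Multiset.mem_toFinset]

theorem FA_cast_zmod_two (A : Set ℕ) [DecidablePred (· ∈ A)] (n : ℕ) :
    (FA A n : ZMod 2) =
      ∑ p : n.Partition, if ∀ a ∈ p.parts, p.parts.count a ∈ A then 1 else 0 := by
  rw [FA, Nat.card_eq_fintype_card, Fintype.card_subtype, sum_boole]

theorem tau_modEq_FA_general (k : ℕ) (n : ℕ) :
    tau (k : ℤ) (n + 1) ≡
      (FA {a : ℕ | 1 ≤ a ∧ a ≤ k ∧ k.choose a % 2 = 1} n : ℤ) [ZMOD 2] := by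
  apply (ZMod.intCast_eq_intCast_iff _ _ 2).mp
  rw [tau_natCast_add_one_eq_sum, Int.cast_sum, Int.cast_natCast, FA_cast_zmod_two]
  exact sum_congr rfl fun p _ ↦ p.cast_prod_neg_one_pow_mul_choose k

/-- For a positive integer `k` and `A = {a : 1 ≤ a ≤ k, C(k,a) ≡ 1 (mod 2)}`, we have
`τ_k(n+1) ≡ F_A(n) (mod 2)`. -/
theorem tau_modEq_FA (k : ℕ) (hk : 0 < k) (n : ℕ) (hn : 0 < n) :
    tau (k : ℤ) (n + 1) ≡
      (FA {a : ℕ | 1 ≤ a ∧ a ≤ k ∧ k.choose a % 2 = 1} n : ℤ) [ZMOD 2] :=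
  tau_modEq_FA_general k n
end

section
/- Let n be a positive integer. Then τ(n+1) ≡ Σ (-1)^{r+s} (mod 23), where the sum runs over all pairs of integers (r, s) ∈ ℤ × ℤ with n = (3r^2 + r)/2 + 23·(3s^2 + s)/2. -/
open PowerSeries Finset

/-!
Modulo 23 the Frobenius gives `(1 - q^m)^24 ≡ (1 - q^m)(1 - q^(23m))`, so `∑ τ(n+1) qⁿ` is
congruent to `φ(q) φ(q^23)` with `φ(q) = ∏ (1 - q^m)`. By Euler's pentagonal number theorem
`φ(q) = ∑_r (-1)^r q^(r(3r+1)/2)`, and the coefficient of `qⁿ` in `φ(q) φ(q^23)` is the signed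
count of the pairs `(r, s)` in the statement. Coefficients up to `qⁿ` only see the factors with
`m ≤ n + 1` and the pentagonal terms with `|r| ≤ n + 1`, so all of this happens in finite sums
and products.
-/

theorem natAbs_le_pentagonal (k : ℤ) : k.natAbs ≤ pentagonal k := by
  have := two_mul_natCast_pentagonal k
  rcases abs_cases k with h | h <;> nlinarith

namespace PowerSeries

variable {R : Type*} [CommRing R]

theorem coeff_mul_one_sub_X_pow_of_lt {N k : ℕ} (f : R⟦X⟧) (h : N < k) :
    coeff N (f * (1 - X ^ k)) = coeff N f := by
  rw [mul_sub, mul_one, map_sub, coeff_mul_X_pow', if_neg (by omega), sub_zero]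

theorem coeff_prod_range_one_sub_X_pow_of_le {N M : ℕ} (h : N ≤ M) :
    coeff N (∏ m ∈ range M, (1 - X ^ (m + 1) : R⟦X⟧)) =
      coeff N (∏ m ∈ range N, (1 - X ^ (m + 1) : R⟦X⟧)) := by
  induction M, h using Nat.le_induction with
  | base => rfl
  | succ M hNM ih => rw [prod_range_succ, coeff_mul_one_sub_X_pow_of_lt _ (by omega), ih]

theorem coeff_prod_range_one_sub_X_pow {N M : ℕ} (h : N ≤ M) :
    coeff N (∏ m ∈ range M, (1 - X ^ (m + 1) : R⟦X⟧)) = coeff N (pentagonalSeries R) := by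
  obtain ⟨M₀, hM₀⟩ := (Filter.tendsto_finset_range.eventually
    (coeff_prod_one_sub_X_pow_eventually_eq R N)).exists_forall_of_atTop
  rw [coeff_prod_range_one_sub_X_pow_of_le h,
    ← coeff_prod_range_one_sub_X_pow_of_le (le_max_left N M₀), hM₀ _ (le_max_right _ _)]

variable (R) in
/-- Indexing by `-r` makes the exponent `r(3r+1)/2`, the form in which the pentagonal numbers
appear in `ramanujanTau_modEq_23`. -/
noncomputable def pentagonalPartialSum (L : ℕ) : R⟦X⟧ :=
  ∑ r ∈ Icc (-(L : ℤ)) L, monomial (pentagonal (-r)) (Int.negOnePow r : R)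

theorem coeff_pentagonalPartialSum {N L : ℕ} (h : N ≤ L) :
    coeff N (pentagonalPartialSum R L) = coeff N (pentagonalSeries R) := by
  simp only [pentagonalPartialSum, map_sum, coeff_monomial]
  by_cases hN : N ∈ Set.range pentagonal
  · obtain ⟨k, rfl⟩ := hN
    rw [sum_eq_single (-k), if_pos (by rw [neg_neg]), coeff_pentagonalSeries_pentagonal,
      Int.negOnePow_neg]
    · intro r _ hr
      exact if_neg fun h => hr (by rw [pentagonal_injective h, neg_neg])
    · intro hk
      have := natAbs_le_pentagonal k
      exact absurd (mem_Icc.2 ⟨by omega, by omega⟩) hk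
  · rw [coeff_pentagonalSeries_eq_zero R hN]
    exact sum_eq_zero fun r _ => if_neg fun h => hN ⟨-r, h.symm⟩

theorem trunc_expand_eq_of_trunc_eq {n d : ℕ} (hd : d ≠ 0) {f g : R⟦X⟧}
    (h : trunc n f = trunc n g) : trunc n (expand d hd f) = trunc n (expand d hd g) := by
  ext N
  simp only [coeff_trunc, coeff_expand]
  split_ifs with hN
  · have := congrArg (Polynomial.coeff · (N / d)) h
    simpa [coeff_trunc, (Nat.div_le_self N d).trans_lt hN] using this
  all_goals rfl

theorem coeff_pentagonalPartialSum_mul_expand (n L d : ℕ) (hd : d ≠ 0) :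
    coeff n (pentagonalPartialSum ℤ L * expand d hd (pentagonalPartialSum ℤ L)) =
      ∑ x ∈ (Icc (-(L : ℤ)) L ×ˢ Icc (-(L : ℤ)) L).filter
          (fun x => 2 * (n : ℤ) = (3 * x.1 ^ 2 + x.1) + d * (3 * x.2 ^ 2 + x.2)),
        (((-1 : ℤˣ) ^ (x.1 + x.2) : ℤˣ) : ℤ) := by
  simp only [pentagonalPartialSum, map_sum, expand_monomial, sum_mul_sum, monomial_mul_monomial,
    coeff_monomial, ← sum_product', sum_filter]
  refine sum_congr rfl fun x _ => ?_
  have hx : n = pentagonal (-x.1) + d * pentagonal (-x.2) ↔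
      2 * (n : ℤ) = (3 * x.1 ^ 2 + x.1) + d * (3 * x.2 ^ 2 + x.2) := by
    have h₁ := two_mul_natCast_pentagonal_neg x.1
    have h₂ := two_mul_natCast_pentagonal_neg x.2
    constructor
    · rintro rfl
      push_cast
      linear_combination h₁ + d * h₂
    · intro h
      have h' : (2 : ℤ) * n = 2 * (pentagonal (-x.1) + d * pentagonal (-x.2) : ℕ) := by
        push_cast
        linear_combination h - h₁ - d * h₂
      exact_mod_cast mul_left_cancel₀ two_ne_zero h'
  rw [if_congr hx rfl rfl, zpow_add, Units.val_mul]
  rfl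

theorem trunc_prod_range_one_sub_X_pow {n M L : ℕ} (hM : n ≤ M) (hL : n ≤ L) :
    trunc (n + 1) (∏ m ∈ range M, (1 - X ^ (m + 1) : R⟦X⟧)) =
      trunc (n + 1) (pentagonalPartialSum R L) := by
  ext N
  simp only [coeff_trunc]
  split_ifs with hN
  · rw [coeff_prod_range_one_sub_X_pow (by omega), coeff_pentagonalPartialSum (by omega)]
  · rfl

theorem one_sub_X_pow_pow_char (p : ℕ) [Fact p.Prime] [CharP R p] (k : ℕ) :
    (1 - X ^ k : R⟦X⟧) ^ p = expand p (Fact.out : p.Prime).ne_zero (1 - X ^ k) := by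
  have : CharP R⟦X⟧ p := charP_of_injective_algebraMap C_injective p
  rw [sub_pow_char, one_pow, ← pow_mul, map_sub, map_one, map_pow, expand_X, ← pow_mul, mul_comm]

theorem coeff_prod_one_sub_X_pow_mul_expand {n M L d : ℕ} (hM : n ≤ M) (hL : n ≤ L)
    (hd : d ≠ 0) :
    coeff n ((∏ m ∈ range M, (1 - X ^ (m + 1) : ℤ⟦X⟧)) *
        expand d hd (∏ m ∈ range M, (1 - X ^ (m + 1) : ℤ⟦X⟧))) =
      ∑ x ∈ (Icc (-(L : ℤ)) L ×ˢ Icc (-(L : ℤ)) L).filter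
          (fun x => 2 * (n : ℤ) = (3 * x.1 ^ 2 + x.1) + d * (3 * x.2 ^ 2 + x.2)),
        (((-1 : ℤˣ) ^ (x.1 + x.2) : ℤˣ) : ℤ) := by
  have h := trunc_prod_range_one_sub_X_pow (R := ℤ) hM hL
  rw [coeff_mul_eq_coeff_trunc_mul_trunc _ _ (Nat.lt_add_one n), h,
    trunc_expand_eq_of_trunc_eq hd h, ← coeff_mul_eq_coeff_trunc_mul_trunc _ _ (Nat.lt_add_one n),
    coeff_pentagonalPartialSum_mul_expand]

theorem map_prod_one_sub_X_pow_pow_succ (p : ℕ) [Fact p.Prime] (s : Finset ℕ) :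
    map (Int.castRingHom (ZMod p)) (∏ m ∈ s, (1 - X ^ (m + 1) : ℤ⟦X⟧) ^ (p + 1)) =
      map (Int.castRingHom (ZMod p)) ((∏ m ∈ s, (1 - X ^ (m + 1))) *
        expand p (Fact.out : p.Prime).ne_zero (∏ m ∈ s, (1 - X ^ (m + 1)))) := by
  simp only [map_mul, map_expand, map_prod, ← prod_mul_distrib]
  refine prod_congr rfl fun m _ => ?_
  rw [map_pow, map_sub, map_one, map_pow, map_X, pow_succ', one_sub_X_pow_pow_char]

end PowerSeries

theorem tau_natCast_succ (k n : ℕ) :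
    tau k (n + 1) = coeff n (∏ m ∈ range (n + 1), (1 - X ^ (m + 1) : ℤ⟦X⟧) ^ k) := by
  rw [tau, Nat.add_sub_cancel, Units.coe_prod]
  refine congrArg _ (prod_congr rfl fun m _ => ?_)
  rw [zpow_natCast, Units.val_pow_eq_pow_val, IsUnit.unit_spec]

theorem coeff_modEq_of_map_eq {p : ℕ} {f g : ℤ⟦X⟧}
    (h : map (Int.castRingHom (ZMod p)) f = map (Int.castRingHom (ZMod p)) g) (n : ℕ) :
    coeff n f ≡ coeff n g [ZMOD p] := by
  rw [← ZMod.intCast_eq_intCast_iff]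
  simpa using congrArg (coeff n) h

theorem tau_prime_succ_modEq (p : ℕ) [Fact p.Prime] (n : ℕ) :
    tau (p + 1 : ℕ) (n + 1) ≡
      ∑ x ∈ (Icc (-(n : ℤ) - 1) ((n : ℤ) + 1) ×ˢ Icc (-(n : ℤ) - 1) ((n : ℤ) + 1)).filter
          (fun x => 2 * (n : ℤ) = (3 * x.1 ^ 2 + x.1) + p * (3 * x.2 ^ 2 + x.2)),
        (((-1 : ℤˣ) ^ (x.1 + x.2) : ℤˣ) : ℤ) [ZMOD p] := by
  have h := coeff_modEq_of_map_eq (map_prod_one_sub_X_pow_pow_succ p (range (n + 1))) n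
  rwa [← tau_natCast_succ, coeff_prod_one_sub_X_pow_mul_expand (n.le_add_right 1)
    (n.le_add_right 1), Nat.cast_add_one n, neg_add'] at h

theorem ramanujanTau_modEq_23_general (n : ℕ) :
    tau 24 (n + 1) ≡
      (∑ x ∈ ((Finset.Icc (-(n : ℤ) - 1) ((n : ℤ) + 1)) ×ˢ
              (Finset.Icc (-(n : ℤ) - 1) ((n : ℤ) + 1))).filter
          (fun x => 2 * (n : ℤ) = (3 * x.1 ^ 2 + x.1) + 23 * (3 * x.2 ^ 2 + x.2)),
        (((-1 : ℤˣ) ^ (x.1 + x.2) : ℤˣ) : ℤ)) [ZMOD 23] := by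
  have : Fact (Nat.Prime 23) := ⟨by norm_num⟩
  exact tau_prime_succ_modEq 23 n

/-- `τ(n+1) ≡ Σ (-1)^(r+s) (mod 23)`, the sum over all pairs of integers `(r, s)` with
`n = (3r²+r)/2 + 23·(3s²+s)/2`.  (Any such pair satisfies `|r|, |s| ≤ n+1`, so the sum may
be taken over `Icc (-(n+1)) (n+1) × Icc (-(n+1)) (n+1)`.) -/
theorem ramanujanTau_modEq_23 (n : ℕ) (hn : 0 < n) :
    tau 24 (n + 1) ≡
      (∑ x ∈ ((Finset.Icc (-(n : ℤ) - 1) ((n : ℤ) + 1)) ×ˢ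
              (Finset.Icc (-(n : ℤ) - 1) ((n : ℤ) + 1))).filter
          (fun x => 2 * (n : ℤ) = (3 * x.1 ^ 2 + x.1) + 23 * (3 * x.2 ^ 2 + x.2)),
        (((-1 : ℤˣ) ^ (x.1 + x.2) : ℤˣ) : ℤ)) [ZMOD 23] :=
  ramanujanTau_modEq_23_general n
end
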